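/- arXiv:1711.00250 — 9 statements merged into one kernel-verified Lean document; each statement's English description precedes it below -/
import Mathlib

section
/- Let ν be an M×N real matrix of rank M (so M ≤ N) and set K = N − M. Let C be an N×K real matrix whose K columns form a basis of the kernel of the linear map x ↦ ν x. Then there exists a nonzero real constant c, depending only on ν and C (and not on R), such that for every N×M real matrix R one has det(ν ⬝ R) = c · det([R | C]), where [R | C] denotes the N×N matrix whose first M columns are those of R and whose last K columns are those of C. -/
/-!
Stack the rows of `ν` on top of the transposed kernel basis `Cᵀ` into a square matrix `P`.
Since `ν * C = 0`, the product `P * [R | C]` is block lower triangular with diagonal blocks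
`ν * R` and `Cᵀ * C`, so `det P * det [R | C] = det (ν * R) * det (Cᵀ * C)`. The Gram matrix
`Cᵀ * C` is invertible because the columns of `C` are independent, and `det P ≠ 0` follows by
taking `R = νᵀ`, as `ν * νᵀ` is invertible when `ν` has full row rank.
So `c = det P / det (Cᵀ * C)`.
-/

/-- The square `N × N` matrix obtained by placing the columns of an `N × M` matrix `X`
before the columns of an `N × K` matrix `Y`, given `M + K = N`. -/
noncomputable def catCols {N M K : ℕ} (h : M + K = N)
    (X : Matrix (Fin N) (Fin M) ℝ) (Y : Matrix (Fin N) (Fin K) ℝ) :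
    Matrix (Fin N) (Fin N) ℝ :=
  (Matrix.fromCols X Y).submatrix id (fun j => finSumFinEquiv.symm (Fin.cast h.symm j))

open Matrix

namespace Matrix

variable {m n k R : Type*}

theorem det_ne_zero_of_rank_eq_card [Field R] [Fintype n] [DecidableEq n] {A : Matrix n n R}
    (h : A.rank = Fintype.card n) : A.det ≠ 0 := by
  have hrows : LinearIndependent R A.row := by
    rw [linearIndependent_iff_card_eq_finrank_span, Set.finrank, ← rank_eq_finrank_span_row, h]
  exact ((isUnit_iff_isUnit_det A).1 (linearIndependent_rows_iff_isUnit.1 hrows)).ne_zero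

theorem rank_eq_card_of_linearIndependent_col [Field R] [Fintype n] {A : Matrix m n R}
    (h : LinearIndependent R A.col) : A.rank = Fintype.card n := by
  rw [rank_eq_finrank_span_cols, ← Set.finrank, ← linearIndependent_iff_card_eq_finrank_span.1 h]

theorem mul_eq_zero_of_col_mem_ker [CommSemiring R] [Fintype n] {A : Matrix m n R}
    {B : Matrix n k R} (h : ∀ j, B.col j ∈ LinearMap.ker A.mulVecLin) : A * B = 0 := by
  ext i j
  exact congrFun (LinearMap.mem_ker.1 (h j)) i

theorem det_submatrix_fromRows_mul_det_submatrix_fromCols [CommRing R] [Fintype m] [Fintype n]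
    [Fintype k] [DecidableEq m] [DecidableEq n] [DecidableEq k] (e : n ≃ m ⊕ k)
    (A : Matrix m n R) (B : Matrix k n R) (X : Matrix n m R) (Y : Matrix n k R)
    (hAY : A * Y = 0) :
    ((fromRows A B).submatrix e id).det * ((fromCols X Y).submatrix id e).det =
      (A * X).det * (B * Y).det := by
  rw [← det_mul, ← Equiv.coe_refl, submatrix_mul_equiv, det_submatrix_equiv_self,
    fromRows_mul_fromCols, hAY, det_fromBlocks_zero₁₂]

end Matrix

theorem catCols_eq_submatrix_fromCols {N M K : ℕ} (h : M + K = N)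
    (X : Matrix (Fin N) (Fin M) ℝ) (Y : Matrix (Fin N) (Fin K) ℝ) :
    catCols h X Y =
      (fromCols X Y).submatrix id ((finCongr h.symm).trans finSumFinEquiv.symm) :=
  rfl

/-- for a full-row-rank `M × N` matrix `ν` and a matrix `C` whose columns form a
basis of `ker ν`, there is a nonzero constant `c`, depending only on `ν` and `C`, with
`det (ν * R) = c * det [R | C]` for every `N × M` matrix `R`. -/
theorem statement0 {M N K : ℕ} (hK : M + K = N)
    (ν : Matrix (Fin M) (Fin N) ℝ) (hrank : ν.rank = M)
    (C : Matrix (Fin N) (Fin K) ℝ)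
    (hC : ∃ b : Module.Basis (Fin K) ℝ (LinearMap.ker ν.mulVecLin),
        ∀ k n, (b k).1 n = C n k) :
    ∃ c : ℝ, c ≠ 0 ∧ ∀ R : Matrix (Fin N) (Fin M) ℝ,
      (ν * R).det = c * (catCols hK R C).det := by
  obtain ⟨b, hb⟩ := hC
  have hcol : C.col = fun k => (b k : Fin N → ℝ) := funext fun k => funext fun n => (hb k n).symm
  have hνC : ν * C = 0 := mul_eq_zero_of_col_mem_ker fun k => hcol ▸ (b k).2
  have hCind : LinearIndependent ℝ C.col :=
    hcol ▸ b.linearIndependent.map' _ (Submodule.ker_subtype _)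
  have hCC : (Cᵀ * C).det ≠ 0 := det_ne_zero_of_rank_eq_card <| by
    rw [rank_transpose_mul_self, rank_eq_card_of_linearIndependent_col hCind]
  have hνν : (ν * νᵀ).det ≠ 0 := det_ne_zero_of_rank_eq_card <| by
    rw [rank_self_mul_transpose, hrank, Fintype.card_fin]
  set P := (fromRows ν Cᵀ).submatrix ((finCongr hK.symm).trans finSumFinEquiv.symm) id
  have hfactor : ∀ R, P.det * (catCols hK R C).det = (ν * R).det * (Cᵀ * C).det := fun R => by
    rw [catCols_eq_submatrix_fromCols]
    exact det_submatrix_fromRows_mul_det_submatrix_fromCols _ ν Cᵀ R C hνC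
  have hP : P.det ≠ 0 := left_ne_zero_of_mul (hfactor νᵀ ▸ mul_ne_zero hνν hCC)
  refine ⟨P.det / (Cᵀ * C).det, div_ne_zero hP hCC, fun R => ?_⟩
  rw [div_mul_eq_mul_div, hfactor R, mul_div_cancel_right₀ _ hCC]
end

section
/- Let M ≤ N, K = N − M. Let Q be an N×N real orthogonal matrix written as Q = [Q1 | Q2] with Q1 of size N×M and Q2 of size N×K, and let S be an invertible M×M real matrix. Suppose ν = S ⬝ Q1ᵀ (this arises from a QR decomposition νᵀ = Q1 Sᵀ of the transpose of a full-row-rank M×N matrix ν). Then for every N×M real matrix R, |det(S)| · |det([R | Q2])| = |det(ν ⬝ R)|; equivalently, |det([R | Q2])| = |det(ν ⬝ R)| / |det(S)|. -/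
open Matrix

/-
If `Q = [Q1 | Q2]` is orthogonal then `Qᵀ [R | Q2]` is block lower triangular with diagonal
blocks `Q1ᵀ R` and `Q2ᵀ Q2 = 1`, and `|det Qᵀ| = 1`. Hence `|det [R | Q2]| = |det (Q1ᵀ R)|`,
and multiplying by `|det S|` gives `|det (S Q1ᵀ R)| = |det (ν R)|`.
-/

theorem abs_det_eq_one_of_transpose_mul_self_eq_one {n : Type*} [Fintype n] [DecidableEq n]
    {A : Matrix n n ℝ} (hA : Aᵀ * A = 1) : |A.det| = 1 := by
  have hsq : |A.det| * |A.det| = 1 := by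
    simpa only [det_mul, det_transpose, det_one, abs_mul_abs_self] using congrArg det hA
  exact (mul_self_eq_one_iff.mp hsq).resolve_right (by linarith [abs_nonneg A.det])

section CatCols

variable {N M K : ℕ} (h : M + K = N)

def finSplit : Fin N ≃ Fin M ⊕ Fin K :=
  (finCongr h.symm).trans finSumFinEquiv.symm

theorem catCols_eq_submatrix (X : Matrix (Fin N) (Fin M) ℝ) (Y : Matrix (Fin N) (Fin K) ℝ) :
    catCols h X Y = (fromCols X Y).submatrix id (finSplit h) :=
  rfl

theorem transpose_catCols_mul_catCols (X X' : Matrix (Fin N) (Fin M) ℝ)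
    (Y Y' : Matrix (Fin N) (Fin K) ℝ) :
    (catCols h X Y)ᵀ * catCols h X' Y' =
      (fromBlocks (Xᵀ * X') (Xᵀ * Y') (Yᵀ * X') (Yᵀ * Y')).submatrix
        (finSplit h) (finSplit h) := by
  rw [catCols_eq_submatrix, catCols_eq_submatrix, transpose_submatrix, transpose_fromCols,
    ← fromRows_mul_fromCols]
  exact submatrix_mul_equiv _ _ (finSplit h) (Equiv.refl _) (finSplit h)

theorem transpose_catCols_mul_self_eq_one_iff (X : Matrix (Fin N) (Fin M) ℝ)
    (Y : Matrix (Fin N) (Fin K) ℝ) :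
    (catCols h X Y)ᵀ * catCols h X Y = 1 ↔
      Xᵀ * X = 1 ∧ Xᵀ * Y = 0 ∧ Yᵀ * X = 0 ∧ Yᵀ * Y = 1 := by
  rw [transpose_catCols_mul_catCols, ← submatrix_one_equiv (finSplit h), ← fromBlocks_one,
    ← fromBlocks_inj]
  exact (reindex (finSplit h).symm (finSplit h).symm).injective.eq_iff

theorem det_transpose_catCols_mul_catCols (X X' : Matrix (Fin N) (Fin M) ℝ)
    (Y : Matrix (Fin N) (Fin K) ℝ) (hXY : Xᵀ * Y = 0) (hY : Yᵀ * Y = 1) :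
    ((catCols h X Y)ᵀ * catCols h X' Y).det = (Xᵀ * X').det := by
  rw [transpose_catCols_mul_catCols, det_submatrix_equiv_self, hXY, hY, det_fromBlocks_zero₁₂,
    det_one, mul_one]

theorem abs_det_catCols_eq_abs_det_transpose_mul (X X' : Matrix (Fin N) (Fin M) ℝ)
    (Y : Matrix (Fin N) (Fin K) ℝ) (hQ : (catCols h X Y)ᵀ * catCols h X Y = 1) :
    |(catCols h X' Y).det| = |(Xᵀ * X').det| := by
  obtain ⟨-, hXY, -, hY⟩ := (transpose_catCols_mul_self_eq_one_iff h X Y).mp hQ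
  rw [← det_transpose_catCols_mul_catCols h X X' Y hXY hY, det_mul, abs_mul, det_transpose,
    abs_det_eq_one_of_transpose_mul_self_eq_one hQ, one_mul]

end CatCols

theorem statement1_general {M N K : ℕ} (hK : M + K = N)
    (Q1 : Matrix (Fin N) (Fin M) ℝ) (Q2 : Matrix (Fin N) (Fin K) ℝ)
    (hQ : (catCols hK Q1 Q2)ᵀ * (catCols hK Q1 Q2) = 1)
    (S : Matrix (Fin M) (Fin M) ℝ)
    (ν : Matrix (Fin M) (Fin N) ℝ) (hν : ν = S * Q1ᵀ)
    (R : Matrix (Fin N) (Fin M) ℝ) :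
    |S.det| * |(catCols hK R Q2).det| = |(ν * R).det| := by
  rw [abs_det_catCols_eq_abs_det_transpose_mul hK Q1 R Q2 hQ, hν, Matrix.mul_assoc, det_mul,
    abs_mul]

/-- if `Q = [Q1 | Q2]` is orthogonal, `S` is invertible and `ν = S * Q1ᵀ`,
then for every `N × M` matrix `R` one has `|det S| * |det [R | Q2]| = |det (ν * R)|`. -/
theorem statement1 {M N K : ℕ} (hK : M + K = N)
    (Q1 : Matrix (Fin N) (Fin M) ℝ) (Q2 : Matrix (Fin N) (Fin K) ℝ)
    (hQ : (catCols hK Q1 Q2)ᵀ * (catCols hK Q1 Q2) = 1)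
    (S : Matrix (Fin M) (Fin M) ℝ) (hS : IsUnit S.det)
    (ν : Matrix (Fin M) (Fin N) ℝ) (hν : ν = S * Q1ᵀ)
    (R : Matrix (Fin N) (Fin M) ℝ) :
    |S.det| * |(catCols hK R Q2).det| = |(ν * R).det| :=
  statement1_general hK Q1 Q2 hQ S ν hν R
end

section
/- Let M̃, K_c, N be positive integers with M̃ ≤ N, and set K = N − M̃ and M = M̃ + K_c. Let ν̃ be an M̃×N real matrix, L a K_c×M̃ real matrix, Q = [Q1 | Q2] an N×N real orthogonal matrix (Q1 of size N×M̃, Q2 of size N×K), and S an invertible M̃×M̃ real matrix with ν̃ = S ⬝ Q1ᵀ. Let R_ind be an N×M̃ real matrix and R_dep an N×K_c real matrix, and define the reduced Jacobian J̃ = ν̃ ⬝ (R_ind + R_dep ⬝ L), an M̃×M̃ matrix. Let A be the (N+K_c)×(N+K_c) block matrix whose first N rows are [R_ind | R_dep | Q2] and whose last K_c rows are [−L | I_{K_c} | 0_{K_c×K}]. Then |det(S)| · |det(A)| = |det(J̃)|. -/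
/-!
Moving the dependent columns of `A` to the end turns it into a block matrix
`[[P, R_dep], [W, I]]` with `P = [R_ind | Q₂]` and `W = [-L | 0]`, whose Schur complement is
`P - R_dep W = [Y | Q₂]` with `Y = R_ind + R_dep L`; so `|det A| = |det [Y | Q₂]|`.
Multiplying `[Y | Q₂]` by `Qᵀ` gives the block-triangular matrix `[[Q₁ᵀ Y, 0], [Q₂ᵀ Y, I]]`,
and `|det Q| = 1`, hence `|det A| = |det (Q₁ᵀ Y)|`. Finally `J̃ = S Q₁ᵀ Y`.
-/

open Matrix

/-- The `(N + Kc) × (N + Kc)` augmented matrix of the conserved-quantity case: its first `N`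
rows are `[Rind | Rdep | Q2]` and its last `Kc` rows are `[-L | I | 0]`, given `Mt + K = N`. -/
noncomputable def augA {Mt Kc N K : ℕ} (h : Mt + K = N)
    (Rind : Matrix (Fin N) (Fin Mt) ℝ) (Rdep : Matrix (Fin N) (Fin Kc) ℝ)
    (Q2 : Matrix (Fin N) (Fin K) ℝ) (L : Matrix (Fin Kc) (Fin Mt) ℝ) :
    Matrix (Fin (N + Kc)) (Fin (N + Kc)) ℝ :=
  (Matrix.fromBlocks (Matrix.fromCols Rind Rdep) Q2
      (Matrix.fromCols (-L) (1 : Matrix (Fin Kc) (Fin Kc) ℝ)) 0).submatrix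
    finSumFinEquiv.symm
    (fun j => (Equiv.sumCongr finSumFinEquiv (Equiv.refl (Fin K))).symm
        (finSumFinEquiv.symm (Fin.cast (by omega : N + Kc = Mt + Kc + K) j)))

def Equiv.sumShuffle {m k c n : Type*} (e : n ≃ m ⊕ k) : (m ⊕ c) ⊕ k ≃ n ⊕ c :=
  (Equiv.sumAssoc m c k).trans <| (Equiv.sumCongr (Equiv.refl m) (Equiv.sumComm c k)).trans <|
    (Equiv.sumAssoc m k c).symm.trans <| Equiv.sumCongr e.symm (Equiv.refl c)

namespace Matrix

variable {R : Type*} {m k c n ι : Type*}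

theorem abs_det_eq_one_of_transpose_mul_self_eq_one [Fintype n] [DecidableEq n] [CommRing R]
    [LinearOrder R] [IsStrictOrderedRing R] {Q : Matrix n n R} (hQ : Qᵀ * Q = 1) :
    |Q.det| = 1 := by
  have hsq : |Q.det| ^ 2 = 1 := by
    simpa [sq_abs, sq, det_mul, det_transpose] using congrArg det hQ
  exact (pow_eq_one_iff_of_nonneg (abs_nonneg _) two_ne_zero).mp hsq

theorem submatrix_fromCols_transpose_mul [Fintype n] [CommSemiring R] (e : n ≃ m ⊕ k)
    (A : Matrix n m R) (B : Matrix n k R) (C : Matrix n m R) (D : Matrix n k R) :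
    ((fromCols A B).submatrix id e)ᵀ * (fromCols C D).submatrix id e =
      (fromBlocks (Aᵀ * C) (Aᵀ * D) (Bᵀ * C) (Bᵀ * D)).submatrix e e := by
  rw [transpose_submatrix, ← submatrix_mul _ _ _ _ _ Function.bijective_id, transpose_fromCols,
    fromRows_mul_fromCols]

theorem transpose_mul_eq_zero_and_transpose_mul_self_eq_one [Fintype n] [DecidableEq m]
    [DecidableEq k] [DecidableEq n] [CommSemiring R] (e : n ≃ m ⊕ k)
    {Q₁ : Matrix n m R} {Q₂ : Matrix n k R}
    (hQ : ((fromCols Q₁ Q₂).submatrix id e)ᵀ * (fromCols Q₁ Q₂).submatrix id e = 1) :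
    Q₁ᵀ * Q₂ = 0 ∧ Q₂ᵀ * Q₂ = 1 := by
  rw [submatrix_fromCols_transpose_mul] at hQ
  have hblocks := congrArg (submatrix · e.symm e.symm) hQ
  simp only [submatrix_submatrix, Equiv.self_comp_symm, submatrix_id_id,
    submatrix_one_equiv, ← fromBlocks_one, fromBlocks_inj] at hblocks
  exact ⟨hblocks.2.1, hblocks.2.2.2⟩

theorem abs_det_submatrix_fromCols_eq [Fintype m] [Fintype k] [Fintype n] [DecidableEq m]
    [DecidableEq k] [DecidableEq n] [CommRing R] [LinearOrder R] [IsStrictOrderedRing R]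
    (e : n ≃ m ⊕ k) {Q₁ : Matrix n m R} {Q₂ : Matrix n k R}
    (hQ : ((fromCols Q₁ Q₂).submatrix id e)ᵀ * (fromCols Q₁ Q₂).submatrix id e = 1)
    (Y : Matrix n m R) :
    |((fromCols Y Q₂).submatrix id e).det| = |(Q₁ᵀ * Y).det| := by
  obtain ⟨h₁₂, h₂₂⟩ := transpose_mul_eq_zero_and_transpose_mul_self_eq_one e hQ
  calc |((fromCols Y Q₂).submatrix id e).det|
      = |((fromCols Q₁ Q₂).submatrix id e).det| * |((fromCols Y Q₂).submatrix id e).det| := by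
        rw [abs_det_eq_one_of_transpose_mul_self_eq_one hQ, one_mul]
    _ = |(((fromCols Q₁ Q₂).submatrix id e)ᵀ * (fromCols Y Q₂).submatrix id e).det| := by
        rw [det_mul, det_transpose, abs_mul]
    _ = |(Q₁ᵀ * Y).det| := by
        rw [submatrix_fromCols_transpose_mul, det_submatrix_equiv_self, h₁₂, h₂₂,
          det_fromBlocks_zero₁₂, det_one, mul_one]

theorem fromBlocks_fromCols_eq_submatrix [DecidableEq c] [Zero R] [One R] [Neg R]
    (e : n ≃ m ⊕ k) (A : Matrix n m R) (B : Matrix n c R) (C : Matrix n k R)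
    (L : Matrix c m R) :
    fromBlocks (fromCols A B) C (fromCols (-L) 1) 0 =
      (fromBlocks ((fromCols A C).submatrix id e) B ((fromCols (-L) 0).submatrix id e) 1).submatrix
        id e.sumShuffle := by
  ext (i | i) ((j | j) | j) <;> simp [Equiv.sumShuffle, one_apply]

theorem det_fromBlocks_submatrix_fromCols_one [Fintype c] [Fintype n] [DecidableEq c]
    [DecidableEq n] [CommRing R] (e : n ≃ m ⊕ k) (A : Matrix n m R) (B : Matrix n c R)
    (C : Matrix n k R) (L : Matrix c m R) :
    (fromBlocks ((fromCols A C).submatrix id e) B ((fromCols (-L) 0).submatrix id e) 1).det =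
      ((fromCols (A + B * L) C).submatrix id e).det := by
  rw [det_fromBlocks_one₂₂]
  congr 1
  ext i j
  rcases hj : e j with a | a <;> simp [hj, mul_apply]

theorem abs_det_submatrix_fromBlocks_fromCols [Fintype c] [Fintype n] [Fintype ι]
    [DecidableEq c] [DecidableEq n] [DecidableEq ι] [CommRing R] [LinearOrder R]
    [IsStrictOrderedRing R] (e : n ≃ m ⊕ k) (f : ι ≃ n ⊕ c) (g : ι ≃ (m ⊕ c) ⊕ k)
    (A : Matrix n m R) (B : Matrix n c R) (C : Matrix n k R) (L : Matrix c m R) :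
    |((fromBlocks (fromCols A B) C (fromCols (-L) 1) 0).submatrix f g).det| =
      |((fromCols (A + B * L) C).submatrix id e).det| := by
  rw [fromBlocks_fromCols_eq_submatrix e, submatrix_submatrix, Function.id_comp,
    ← Equiv.coe_trans, abs_det_submatrix_equiv_equiv, det_fromBlocks_submatrix_fromCols_one]

end Matrix

theorem statement4_general {Mt Kc N K : ℕ}
    (hK : Mt + K = N)
    (νt : Matrix (Fin Mt) (Fin N) ℝ)
    (L : Matrix (Fin Kc) (Fin Mt) ℝ)
    (Q1 : Matrix (Fin N) (Fin Mt) ℝ) (Q2 : Matrix (Fin N) (Fin K) ℝ)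
    (hQ : (catCols hK Q1 Q2)ᵀ * (catCols hK Q1 Q2) = 1)
    (S : Matrix (Fin Mt) (Fin Mt) ℝ)
    (hν : νt = S * Q1ᵀ)
    (Rind : Matrix (Fin N) (Fin Mt) ℝ) (Rdep : Matrix (Fin N) (Fin Kc) ℝ) :
    |S.det| * |(augA hK Rind Rdep Q2 L).det| = |(νt * (Rind + Rdep * L)).det| := by
  let e : Fin N ≃ Fin Mt ⊕ Fin K := (finCongr hK.symm).trans finSumFinEquiv.symm
  have hA : augA hK Rind Rdep Q2 L =
      (fromBlocks (fromCols Rind Rdep) Q2 (fromCols (-L) 1) 0).submatrix finSumFinEquiv.symm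
        ((finCongr (by omega)).trans <| finSumFinEquiv.symm.trans <|
          (Equiv.sumCongr finSumFinEquiv (Equiv.refl (Fin K))).symm) := rfl
  rw [hA, abs_det_submatrix_fromBlocks_fromCols e, abs_det_submatrix_fromCols_eq e hQ, hν,
    Matrix.mul_assoc, det_mul, abs_mul]

/-- with `ν̃ = S * Q1ᵀ` for orthogonal `Q = [Q1 | Q2]` and invertible `S`,
the augmented matrix `A` (first `N` rows `[Rind | Rdep | Q2]`, last `Kc` rows
`[-L | I | 0]`) and the reduced Jacobian `J̃ = ν̃ * (Rind + Rdep * L)` satisfy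
`|det S| * |det A| = |det J̃|`. -/
theorem statement4 {Mt Kc N K : ℕ} (hMt : 0 < Mt) (hKc : 0 < Kc) (hN : 0 < N)
    (hK : Mt + K = N)
    (νt : Matrix (Fin Mt) (Fin N) ℝ)
    (L : Matrix (Fin Kc) (Fin Mt) ℝ)
    (Q1 : Matrix (Fin N) (Fin Mt) ℝ) (Q2 : Matrix (Fin N) (Fin K) ℝ)
    (hQ : (catCols hK Q1 Q2)ᵀ * (catCols hK Q1 Q2) = 1)
    (S : Matrix (Fin Mt) (Fin Mt) ℝ) (hS : IsUnit S.det)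
    (hν : νt = S * Q1ᵀ)
    (Rind : Matrix (Fin N) (Fin Mt) ℝ) (Rdep : Matrix (Fin N) (Fin Kc) ℝ) :
    |S.det| * |(augA hK Rind Rdep Q2 L).det| = |(νt * (Rind + Rdep * L)).det| :=
  statement4_general hK νt L Q1 Q2 hQ S hν Rind Rdep
end

section
/- Let ν be an M×N real matrix of rank M, set K = N − M, let R be an N×M real matrix, and let c¹,…,c^K be a basis of the kernel of ν, assembled into the N×K matrix C. Let A = [R | C] be the resulting N×N matrix. Suppose there are subsets 𝔪 of the column indices {1,…,M}, 𝔫 of the row indices {1,…,N}, and a subset I_s of the kernel-column indices {1,…,K} such that: (i) R(n,m) = 0 for every m ∈ 𝔪 and every n ∉ 𝔫 (output-completeness); (ii) c^α(n) = 0 for every α ∈ I_s and every n ∉ 𝔫 (the kernel vectors indexed by I_s have support in 𝔫); and (iii) |𝔪| + |I_s| = |𝔫| (the index χ of the subnetwork (𝔪,𝔫) is zero, i.e. (𝔪,𝔫) is a buffering structure). Let A_{Γs} be the |𝔫|×|𝔫| submatrix of A with rows indexed by 𝔫 and columns indexed by 𝔪 together with the kernel columns in I_s, and let A_{Γ̄s}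 be the complementary submatrix of A with rows indexed by the complement of 𝔫 and columns indexed by the complement of 𝔪 together with the kernel columns not in I_s. Then |det(A)| = |det(A_{Γs})| · |det(A_{Γ̄s})|. -/
/-!
Permute the rows of `A` so that those in `𝔫` come first, and its columns so that those of
`𝔪` and `Is` come first. Output-completeness and the support condition on the kernel columns
say exactly that the lower-left block of the permuted matrix vanishes, so it is block upper
triangular with diagonal blocks `A_Γs` and `A_Γ̄s`; the permutations change `det A` only by a sign.
-/

open Matrix

/-- The submatrix of the augmented matrix `[R | C]` with rows restricted to the reactions
satisfying `Pn` and columns restricted to the chemicals satisfying `Pm` together with the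
kernel columns satisfying `Pk`. -/
def subBlock {M N K : ℕ} (R : Matrix (Fin N) (Fin M) ℝ) (C : Matrix (Fin N) (Fin K) ℝ)
    (Pn : Fin N → Prop) (Pm : Fin M → Prop) (Pk : Fin K → Prop) :
    Matrix {n // Pn n} ({m // Pm m} ⊕ {α // Pk α}) ℝ :=
  Matrix.fromCols (R.submatrix (fun i => i.1) (fun j => j.1))
    (C.submatrix (fun i => i.1) (fun j => j.1))

theorem Matrix.abs_det_submatrix_eq_mul_of_zero {ι κ S₁ S₂ R : Type*}
    [Fintype ι] [DecidableEq ι] [Fintype S₁] [DecidableEq S₁] [Fintype S₂] [DecidableEq S₂]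
    [CommRing R] [LinearOrder R] [IsStrictOrderedRing R]
    (B : Matrix ι κ R) (σ : ι ≃ κ) (s : Finset ι) (c : κ ≃ S₁ ⊕ S₂)
    (e : {i // i ∈ s} ≃ S₁) (e' : {i // i ∉ s} ≃ S₂)
    (hB : ∀ i ∉ s, ∀ j, B i (c.symm (Sum.inl j)) = 0) :
    |(B.submatrix id σ).det| =
      |(B.submatrix Subtype.val (fun i => c.symm (Sum.inl (e i)))).det| *
      |(B.submatrix Subtype.val (fun i => c.symm (Sum.inr (e' i)))).det| := by
  set A := B.submatrix (Equiv.sumCompl (· ∈ s)) (c.symm ∘ Sum.map e e')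
  have hA : A.toBlocks₂₁ = 0 := by
    ext i j
    exact hB _ i.2 _
  calc |(B.submatrix id σ).det| = |A.det| := by
        rw [← abs_det_submatrix_equiv_equiv (Equiv.sumCompl (· ∈ s))
          (((Equiv.sumCongr e e').trans c.symm).trans σ.symm)]
        congr 3
        ext i j
        simp [A]
    _ = |(fromBlocks A.toBlocks₁₁ A.toBlocks₁₂ 0 A.toBlocks₂₂).det| := by
        rw [← hA, fromBlocks_toBlocks]
    _ = _ := by
        rw [det_fromBlocks_zero₂₁, abs_mul]
        rfl

def Equiv.sumSplitCompl {α β : Type*} (P : α → Prop) (Q : β → Prop) [DecidablePred P]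
    [DecidablePred Q] :
    α ⊕ β ≃ ({a // P a} ⊕ {b // Q b}) ⊕ ({a // ¬P a} ⊕ {b // ¬Q b}) :=
  ((Equiv.sumCompl P).symm.sumCongr (Equiv.sumCompl Q).symm).trans (Equiv.sumSumSumComm _ _ _ _)

theorem Equiv.sumSplitCompl_symm_inl {α β : Type*} (P : α → Prop) (Q : β → Prop)
    [DecidablePred P] [DecidablePred Q] (x : {a // P a} ⊕ {b // Q b}) :
    (Equiv.sumSplitCompl P Q).symm (Sum.inl x) = Sum.map Subtype.val Subtype.val x := by
  rcases x with x | x <;> rfl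

theorem Equiv.sumSplitCompl_symm_inr {α β : Type*} (P : α → Prop) (Q : β → Prop)
    [DecidablePred P] [DecidablePred Q] (x : {a // ¬P a} ⊕ {b // ¬Q b}) :
    (Equiv.sumSplitCompl P Q).symm (Sum.inr x) = Sum.map Subtype.val Subtype.val x := by
  rcases x with x | x <;> rfl

theorem subBlock_eq_submatrix {M N K : ℕ} (R : Matrix (Fin N) (Fin M) ℝ)
    (C : Matrix (Fin N) (Fin K) ℝ) (Pn : Fin N → Prop) (Pm : Fin M → Prop) (Pk : Fin K → Prop) :
    subBlock R C Pn Pm Pk =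
      (fromCols R C).submatrix Subtype.val (Sum.map Subtype.val Subtype.val) := by
  ext i (m | α) <;> rfl

theorem statement7_general {M N K : ℕ} (hK : M + K = N)
    (R : Matrix (Fin N) (Fin M) ℝ) (C : Matrix (Fin N) (Fin K) ℝ)
    (𝔪 : Finset (Fin M)) (𝔫 : Finset (Fin N)) (Is : Finset (Fin K))
    (h1 : ∀ m ∈ 𝔪, ∀ n ∉ 𝔫, R n m = 0)
    (h2 : ∀ α ∈ Is, ∀ n ∉ 𝔫, C n α = 0)
    (e : {n // n ∈ 𝔫} ≃ ({m // m ∈ 𝔪} ⊕ {α // α ∈ Is}))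
    (e' : {n // n ∉ 𝔫} ≃ ({m // m ∉ 𝔪} ⊕ {α // α ∉ Is})) :
    |(catCols hK R C).det| =
      |((subBlock R C (· ∈ 𝔫) (· ∈ 𝔪) (· ∈ Is)).submatrix id e).det| *
      |((subBlock R C (· ∉ 𝔫) (· ∉ 𝔪) (· ∉ Is)).submatrix id e').det| := by
  have hzero : ∀ n ∉ 𝔫, ∀ x,
      fromCols R C n ((Equiv.sumSplitCompl (· ∈ 𝔪) (· ∈ Is)).symm (Sum.inl x)) = 0 := by
    rintro n hn (⟨m, hm⟩ | ⟨α, hα⟩)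
    exacts [h1 m hm n hn, h2 α hα n hn]
  -- `catCols hK R C` is `fromCols R C` with its columns reindexed along this equivalence.
  have hfactor := abs_det_submatrix_eq_mul_of_zero (fromCols R C)
    ((finCongr hK.symm).trans finSumFinEquiv.symm) 𝔫 _ e e' hzero
  simp only [Equiv.sumSplitCompl_symm_inl, Equiv.sumSplitCompl_symm_inr] at hfactor
  rw [subBlock_eq_submatrix, subBlock_eq_submatrix, submatrix_submatrix, submatrix_submatrix]
  exact hfactor

/-- factorization of `|det A|` along a buffering structure `(𝔪, 𝔫)` (with
supported kernel columns `Is`) in the case of trivial cokernel: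
`|det A| = |det A_Γs| * |det A_Γ̄s|`. -/
theorem statement7 {M N K : ℕ} (hK : M + K = N)
    (ν : Matrix (Fin M) (Fin N) ℝ) (hrank : ν.rank = M)
    (R : Matrix (Fin N) (Fin M) ℝ) (C : Matrix (Fin N) (Fin K) ℝ)
    (hC : ∃ b : Module.Basis (Fin K) ℝ (LinearMap.ker ν.mulVecLin),
        ∀ k n, (b k).1 n = C n k)
    (𝔪 : Finset (Fin M)) (𝔫 : Finset (Fin N)) (Is : Finset (Fin K))
    (h1 : ∀ m ∈ 𝔪, ∀ n ∉ 𝔫, R n m = 0)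
    (h2 : ∀ α ∈ Is, ∀ n ∉ 𝔫, C n α = 0)
    (h3 : 𝔪.card + Is.card = 𝔫.card)
    (e : {n // n ∈ 𝔫} ≃ ({m // m ∈ 𝔪} ⊕ {α // α ∈ Is}))
    (e' : {n // n ∉ 𝔫} ≃ ({m // m ∉ 𝔪} ⊕ {α // α ∉ Is})) :
    |(catCols hK R C).det| =
      |((subBlock R C (· ∈ 𝔫) (· ∈ 𝔪) (· ∈ Is)).submatrix id e).det| *
      |((subBlock R C (· ∉ 𝔫) (· ∉ 𝔪) (· ∉ Is)).submatrix id e').det| :=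
  statement7_general hK R C 𝔪 𝔫 Is h1 h2 e e'
end

section
/- Let ν be an M×N real matrix of rank M, K = N − M, R an N×M real matrix, and c¹,…,c^K a basis of ker ν assembled into the N×K matrix C; let A = [R | C]. Suppose (𝔪, 𝔫, I_s) satisfy: R(n,m) = 0 for m ∈ 𝔪, n ∉ 𝔫; c^α(n) = 0 for α ∈ I_s, n ∉ 𝔫; and |𝔪| + |I_s| = |𝔫|. Let A_{Γs} be the submatrix of A with rows 𝔫 and columns 𝔪 ∪ I_s, and A_{Γ̄s} the complementary submatrix. Then the Jacobian J = ν ⬝ R is singular if and only if A_{Γs} is singular or A_{Γ̄s} is singular; that is, det(ν ⬝ R) = 0 ⟺ det(A_{Γs}) = 0 ∨ det(A_{Γ̄s}) = 0. -/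
/-!
Put `D = [ν; Cᵀ]`. Since `ν C = 0`, the product `D [R | C]` is block lower triangular with
diagonal blocks `ν R` and `Cᵀ C`, so after matching rows and columns through any bijections,
`det D · det [R | C] = det (ν R) · det (Cᵀ C)`. Both `D` and the Gram matrix `Cᵀ C` are
nonsingular because the columns of `C` form a basis of `ker ν`: a vector of `ker ν` that is
orthogonal to all of them vanishes. Finally, ordering the rows as `𝔫, 𝔫ᶜ` and the columns as
`𝔪 ∪ I_s, 𝔪ᶜ ∪ I_sᶜ`, output-completeness makes `[R | C]` block upper triangular with diagonal
blocks `A_Γs` and `A_Γ̄s`.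
-/

open Matrix

namespace Matrix

section KernelBasis

variable {α m n κ : Type*} [CommRing α] [Fintype n] [Fintype κ]
  {ν : Matrix m n α} {C : Matrix n κ α}
  (b : Module.Basis κ α (LinearMap.ker ν.mulVecLin)) (hb : ∀ k i, (b k : n → α) i = C i k)
include hb

theorem mulVecLin_eq_subtype_comp_basis :
    C.mulVecLin = (LinearMap.ker ν.mulVecLin).subtype ∘ₗ b.equivFun.symm.toLinearMap := by
  ext x i
  simp [mulVec, dotProduct, Module.Basis.equivFun_symm_apply, hb, mul_comm]

theorem mul_eq_zero_of_basis_ker : ν * C = 0 := by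
  classical
  apply Matrix.toLin'.injective
  rw [toLin'_apply', mulVecLin_mul, mulVecLin_eq_subtype_comp_basis b hb, ← LinearMap.comp_assoc,
    LinearMap.comp_ker_subtype, LinearMap.zero_comp, map_zero]

theorem range_mulVecLin_eq_ker_of_basis :
    LinearMap.range C.mulVecLin = LinearMap.ker ν.mulVecLin := by
  rw [mulVecLin_eq_subtype_comp_basis b hb, LinearMap.range_comp_of_range_eq_top _
    (LinearEquiv.range _), Submodule.range_subtype]

theorem mulVec_injective_of_basis_ker : Function.Injective C.mulVec := by
  rw [← coe_mulVecLin, mulVecLin_eq_subtype_comp_basis b hb, LinearMap.coe_comp]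
  exact Subtype.val_injective.comp b.equivFun.symm.injective

end KernelBasis

theorem det_submatrix_ne_zero_of_mulVec_injective {𝕜 m n ι : Type*} [Field 𝕜] [Fintype n]
    [Fintype ι] [DecidableEq ι] {D : Matrix m n 𝕜}
    (hD : Function.Injective D.mulVec) (σ : ι ≃ m) (τ : ι ≃ n) : (D.submatrix σ τ).det ≠ 0 := by
  have : Function.Injective (D.submatrix σ τ).mulVec := by
    have hcomp : (D.submatrix σ τ).mulVec = (· ∘ σ) ∘ D.mulVec ∘ (· ∘ τ.symm) :=
      funext fun v => submatrix_mulVec_equiv D v σ τ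
    rw [hcomp]
    exact σ.surjective.injective_comp_right.comp (hD.comp τ.symm.surjective.injective_comp_right)
  exact ((isUnit_iff_isUnit_det _).mp (mulVec_injective_iff_isUnit.mp this)).ne_zero

section OrderedField

variable {𝕜 m n κ : Type*} [Field 𝕜] [LinearOrder 𝕜] [IsStrictOrderedRing 𝕜]
  [Fintype n] [Fintype κ]

theorem det_transpose_mul_self_ne_zero [DecidableEq κ] {C : Matrix n κ 𝕜}
    (hC : Function.Injective C.mulVec) : (Cᵀ * C).det ≠ 0 := by
  have : Function.Injective (Cᵀ * C).mulVecLin := by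
    rwa [← LinearMap.ker_eq_bot, ker_mulVecLin_transpose_mul_self, LinearMap.ker_eq_bot]
  exact ((isUnit_iff_isUnit_det _).mp (mulVec_injective_iff_isUnit.mp this)).ne_zero

theorem mulVec_fromRows_transpose_injective {ν : Matrix m n 𝕜} {C : Matrix n κ 𝕜}
    (hrange : LinearMap.range C.mulVecLin = LinearMap.ker ν.mulVecLin) :
    Function.Injective (fromRows ν Cᵀ).mulVec := by
  rw [← coe_mulVecLin, ← LinearMap.ker_eq_bot, LinearMap.ker_eq_bot']
  intro y hy
  rw [mulVecLin_apply, fromRows_mulVec] at hy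
  have hνy : ν *ᵥ y = 0 := funext fun i => congrFun hy (Sum.inl i)
  have hCy : Cᵀ *ᵥ y = 0 := funext fun k => congrFun hy (Sum.inr k)
  obtain ⟨x, rfl⟩ : y ∈ LinearMap.range C.mulVecLin := by rw [hrange]; exact hνy
  have hx : x ∈ LinearMap.ker (Cᵀ * C).mulVecLin := by
    rw [LinearMap.mem_ker, mulVecLin_apply, ← mulVec_mulVec]
    exact hCy
  rw [ker_mulVecLin_transpose_mul_self] at hx
  exact hx

end OrderedField

theorem det_submatrix_fromRows_mul_det_submatrix_fromCols_s8 {α m n κ ι : Type*} [CommRing α]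
    [Fintype m] [Fintype n] [Fintype κ] [Fintype ι] [DecidableEq m] [DecidableEq κ] [DecidableEq ι]
    (ν : Matrix m n α) (L : Matrix κ n α) (R : Matrix n m α) (C : Matrix n κ α) (hνC : ν * C = 0)
    (σ : ι ≃ n) (τ : ι ≃ m ⊕ κ) :
    ((fromRows ν L).submatrix τ σ).det * ((fromCols R C).submatrix σ τ).det =
      (ν * R).det * (L * C).det := by
  rw [← det_mul, submatrix_mul_equiv, det_submatrix_equiv_self, fromRows_mul_fromCols, hνC,
    det_fromBlocks_zero₁₂]

end Matrix

def sumSubtypeComplEquiv {α β : Type*} (p : α → Prop) (q : β → Prop) [DecidablePred p]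
    [DecidablePred q] :
    ({a // p a} ⊕ {b // q b}) ⊕ ({a // ¬p a} ⊕ {b // ¬q b}) ≃ α ⊕ β :=
  (Equiv.sumSumSumComm _ _ _ _).trans ((Equiv.sumCompl p).sumCongr (Equiv.sumCompl q))

@[simp]
theorem sumSubtypeComplEquiv_inl {α β : Type*} (p : α → Prop) (q : β → Prop) [DecidablePred p]
    [DecidablePred q] (x : {a // p a} ⊕ {b // q b}) :
    sumSubtypeComplEquiv p q (.inl x) = Sum.map Subtype.val Subtype.val x := by
  cases x <;> rfl

@[simp]
theorem sumSubtypeComplEquiv_inr {α β : Type*} (p : α → Prop) (q : β → Prop) [DecidablePred p]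
    [DecidablePred q] (x : {a // ¬p a} ⊕ {b // ¬q b}) :
    sumSubtypeComplEquiv p q (.inr x) = Sum.map Subtype.val Subtype.val x := by
  cases x <;> rfl

theorem subBlock_apply {M N K : ℕ} (R : Matrix (Fin N) (Fin M) ℝ) (C : Matrix (Fin N) (Fin K) ℝ)
    (Pn : Fin N → Prop) (Pm : Fin M → Prop) (Pk : Fin K → Prop) (i : {n // Pn n})
    (j : {m // Pm m} ⊕ {α // Pk α}) :
    subBlock R C Pn Pm Pk i j = fromCols R C i (Sum.map Subtype.val Subtype.val j) := by
  cases j <;> rfl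

theorem det_fromCols_submatrix_eq_det_subBlock_mul {M N K : ℕ} (R : Matrix (Fin N) (Fin M) ℝ)
    (C : Matrix (Fin N) (Fin K) ℝ) (Pn : Fin N → Prop) (Pm : Fin M → Prop) (Pk : Fin K → Prop)
    [DecidablePred Pn] [DecidablePred Pm] [DecidablePred Pk]
    -- arguments rather than `Subtype.fintype`, so that `Finset` subtypes keep their own instance
    [Fintype {n // Pn n}] [Fintype {n // ¬Pn n}]
    (hR : ∀ m, Pm m → ∀ n, ¬Pn n → R n m = 0) (hC : ∀ α, Pk α → ∀ n, ¬Pn n → C n α = 0)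
    (e : {n // Pn n} ≃ ({m // Pm m} ⊕ {α // Pk α}))
    (e' : {n // ¬Pn n} ≃ ({m // ¬Pm m} ⊕ {α // ¬Pk α})) :
    ((fromCols R C).submatrix (Equiv.sumCompl Pn)
        ((e.sumCongr e').trans (sumSubtypeComplEquiv Pm Pk))).det =
      ((subBlock R C Pn Pm Pk).submatrix id e).det *
        ((subBlock R C (¬Pn ·) (¬Pm ·) (¬Pk ·)).submatrix id e').det := by
  set A := (fromCols R C).submatrix (Equiv.sumCompl Pn)
    ((e.sumCongr e').trans (sumSubtypeComplEquiv Pm Pk))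
  have h₂₁ : A.toBlocks₂₁ = 0 := by
    ext i j
    rcases h : e j with m | α
    · simp [A, toBlocks₂₁, h, hR m m.2 i i.2]
    · simp [A, toBlocks₂₁, h, hC α α.2 i i.2]
  rw [← fromBlocks_toBlocks A, h₂₁, det_fromBlocks_zero₂₁]
  congr 2 <;> ext i j <;> simp [A, toBlocks₁₁, toBlocks₂₂, subBlock_apply]

theorem statement8_general {M N K : ℕ}
    (ν : Matrix (Fin M) (Fin N) ℝ)
    (R : Matrix (Fin N) (Fin M) ℝ) (C : Matrix (Fin N) (Fin K) ℝ)
    (hC : ∃ b : Module.Basis (Fin K) ℝ (LinearMap.ker ν.mulVecLin),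
        ∀ k n, (b k).1 n = C n k)
    (𝔪 : Finset (Fin M)) (𝔫 : Finset (Fin N)) (Is : Finset (Fin K))
    (h1 : ∀ m ∈ 𝔪, ∀ n ∉ 𝔫, R n m = 0)
    (h2 : ∀ α ∈ Is, ∀ n ∉ 𝔫, C n α = 0)
    (e : {n // n ∈ 𝔫} ≃ ({m // m ∈ 𝔪} ⊕ {α // α ∈ Is}))
    (e' : {n // n ∉ 𝔫} ≃ ({m // m ∉ 𝔪} ⊕ {α // α ∉ Is})) :
    (ν * R).det = 0 ↔
      ((subBlock R C (· ∈ 𝔫) (· ∈ 𝔪) (· ∈ Is)).submatrix id e).det = 0 ∨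
      ((subBlock R C (· ∉ 𝔫) (· ∉ 𝔪) (· ∉ Is)).submatrix id e').det = 0 := by
  obtain ⟨b, hb⟩ := hC
  have key := det_submatrix_fromRows_mul_det_submatrix_fromCols_s8 ν Cᵀ R C
    (mul_eq_zero_of_basis_ker b hb) (Equiv.sumCompl (· ∈ 𝔫))
    ((e.sumCongr e').trans (sumSubtypeComplEquiv (· ∈ 𝔪) (· ∈ Is)))
  rw [det_fromCols_submatrix_eq_det_subBlock_mul R C (· ∈ 𝔫) (· ∈ 𝔪) (· ∈ Is) h1 h2] at key
  have hD := det_submatrix_ne_zero_of_mulVec_injective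
    (mulVec_fromRows_transpose_injective (range_mulVecLin_eq_ker_of_basis b hb))
    ((e.sumCongr e').trans (sumSubtypeComplEquiv (· ∈ 𝔪) (· ∈ Is))) (Equiv.sumCompl (· ∈ 𝔫))
  have hG := det_transpose_mul_self_ne_zero (mulVec_injective_of_basis_ker b hb)
  rw [← mul_eq_zero_iff_right hG, ← key, mul_eq_zero_iff_left hD, mul_eq_zero]

/-- structural bifurcation criterion for a buffering structure `(𝔪, 𝔫)` with
supported kernel columns `Is`: the Jacobian `J = ν * R` is singular iff `A_Γs` or `A_Γ̄s`
is singular. -/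
theorem statement8 {M N K : ℕ} (hK : M + K = N)
    (ν : Matrix (Fin M) (Fin N) ℝ) (hrank : ν.rank = M)
    (R : Matrix (Fin N) (Fin M) ℝ) (C : Matrix (Fin N) (Fin K) ℝ)
    (hC : ∃ b : Module.Basis (Fin K) ℝ (LinearMap.ker ν.mulVecLin),
        ∀ k n, (b k).1 n = C n k)
    (𝔪 : Finset (Fin M)) (𝔫 : Finset (Fin N)) (Is : Finset (Fin K))
    (h1 : ∀ m ∈ 𝔪, ∀ n ∉ 𝔫, R n m = 0)
    (h2 : ∀ α ∈ Is, ∀ n ∉ 𝔫, C n α = 0)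
    (h3 : 𝔪.card + Is.card = 𝔫.card)
    (e : {n // n ∈ 𝔫} ≃ ({m // m ∈ 𝔪} ⊕ {α // α ∈ Is}))
    (e' : {n // n ∉ 𝔫} ≃ ({m // m ∉ 𝔪} ⊕ {α // α ∉ Is})) :
    (ν * R).det = 0 ↔
      ((subBlock R C (· ∈ 𝔫) (· ∈ 𝔪) (· ∈ Is)).submatrix id e).det = 0 ∨
      ((subBlock R C (· ∉ 𝔫) (· ∉ 𝔪) (· ∉ Is)).submatrix id e').det = 0 :=
  statement8_general ν R C hC 𝔪 𝔫 Is h1 h2 e e'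
end

section
/- Let ν be an M×N real matrix of rank M, K = N − M, R an N×M real matrix, c¹,…,c^K a basis of ker ν assembled into the N×K matrix C, and A = [R | C]. Suppose Γ₁ ⊂ Γ₂ ⊂ … ⊂ Γ_L is a nested sequence of buffering structures: there are increasing chains of subsets 𝔪₁ ⊆ … ⊆ 𝔪_L = {1,…,M} (chemicals), 𝔫₁ ⊆ … ⊆ 𝔫_L = {1,…,N} (reactions), and I₁ ⊆ … ⊆ I_L = {1,…,K} (kernel indices) such that for each s: (i) R(n,m) = 0 for every m ∈ 𝔪_s and n ∉ 𝔫_s; (ii) c^α(n) = 0 for every α ∈ I_s and n ∉ 𝔫_s; and (iii) |𝔪_s| + |I_s| = |𝔫_s|. For s = 1,…,L−1 let A_{Γ_{s+1}∖Γ_s} be the submatrix of A with rows 𝔫_{s+1}∖𝔫_s and columns (𝔪_{s+1}∖𝔪_s) ∪ (I_{s+1}∖I_s), and let A_{Γ₁} be the submatrix with rows 𝔫₁ and columns 𝔪₁ ∪ I₁. Then |det(A)| = |det(A_{Γ₁})| · ∏_{s=1}^{L−1} |det(A_{Γ_{s+1}∖Γ_s})|. -/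
/-!
Let every reaction, chemical and kernel index belong to the layer `Γ_{s+1} ∖ Γ_s` in which it
first appears. Output-completeness (i) and (ii) say that an entry of `A = [R | C]` vanishes
whenever its column lies in an earlier layer than its row, so once the columns are matched with
the rows layer by layer through the given bijections, `A` becomes block upper triangular with the
diagonal blocks `A_{Γ_{s+1} ∖ Γ_s}`. Reordering columns changes the determinant only by a sign.
-/

open Matrix

open Finset

section ChainLayer

variable {X : Type*} [DecidableEq X] {L : ℕ} {F : Fin (L + 1) → Finset X}

theorem exists_mem_sdiff_of_mem_last (hF0 : F 0 = ∅) {x : X} (hx : x ∈ F (Fin.last L)) :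
    ∃ t : Fin L, x ∈ F t.succ \ F t.castSucc := by
  by_contra! h
  have hnot : ∀ s, x ∉ F s := by
    intro s
    induction s using Fin.induction with
    | zero => simp [hF0]
    | succ t ih => exact fun hx => h t (mem_sdiff.2 ⟨hx, ih⟩)
  exact hnot _ hx

variable [Fintype X]

noncomputable def chainLayer (hF0 : F 0 = ∅) (hFL : F (Fin.last L) = univ) (x : X) : Fin L :=
  (exists_mem_sdiff_of_mem_last hF0 (hFL.symm ▸ mem_univ x)).choose

theorem mem_iff_castSucc_chainLayer_lt (hF : Monotone F) (hF0 : F 0 = ∅)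
    (hFL : F (Fin.last L) = univ) {x : X} {s : Fin (L + 1)} :
    x ∈ F s ↔ (chainLayer hF0 hFL x).castSucc < s := by
  have hx := mem_sdiff.1 (exists_mem_sdiff_of_mem_last hF0 (hFL.symm ▸ mem_univ x)).choose_spec
  constructor
  · intro hs
    by_contra! hle
    exact hx.2 (hF hle hs)
  · intro hlt
    exact hF (Fin.castSucc_lt_iff_succ_le.1 hlt) hx.1

theorem chainLayer_eq_iff (hF : Monotone F) (hF0 : F 0 = ∅) (hFL : F (Fin.last L) = univ)
    {x : X} {t : Fin L} : chainLayer hF0 hFL x = t ↔ x ∈ F t.succ \ F t.castSucc := by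
  rw [mem_sdiff, mem_iff_castSucc_chainLayer_lt hF, mem_iff_castSucc_chainLayer_lt hF,
    Fin.castSucc_lt_succ_iff, Fin.castSucc_lt_castSucc_iff, not_lt, le_antisymm_iff]

theorem eq_zero_of_chainLayer_lt {ι β : Type*} [DecidableEq ι] [Fintype ι] [Zero β]
    (A : ι → X → β) {G : Fin (L + 1) → Finset ι}
    (hF : Monotone F) (hF0 : F 0 = ∅) (hFL : F (Fin.last L) = univ)
    (hG : Monotone G) (hG0 : G 0 = ∅) (hGL : G (Fin.last L) = univ)
    (hA : ∀ s, ∀ x ∈ F s, ∀ i ∉ G s, A i x = 0) {i : ι} {x : X}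
    (h : chainLayer hF0 hFL x < chainLayer hG0 hGL i) : A i x = 0 :=
  hA _ x ((mem_iff_castSucc_chainLayer_lt hF hF0 hFL).2 (Fin.castSucc_lt_castSucc_iff.2 h)) i
    ((mem_iff_castSucc_chainLayer_lt hG hG0 hGL).not.2 (lt_irrefl _))

end ChainLayer

namespace Matrix

theorem abs_det_submatrix_id_equiv {ι κ R : Type*} [Fintype ι] [DecidableEq ι] [CommRing R]
    [LinearOrder R] [IsStrictOrderedRing R] (A : Matrix ι κ R) (e₁ e₂ : ι ≃ κ) :
    |(A.submatrix id e₁).det| = |(A.submatrix id e₂).det| := by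
  have h : A.submatrix id e₁ =
      (A.submatrix id e₂).submatrix (Equiv.refl ι) (e₁.trans e₂.symm) := by
    ext
    simp
  rw [h, abs_det_submatrix_equiv_equiv]

theorem det_submatrix_ofFiberEquiv {ι κ α R : Type*} [Fintype ι] [DecidableEq ι] [LinearOrder α]
    [Fintype α] [CommRing R] (A : Matrix ι κ R) {p : ι → α} {q : κ → α}
    (e : ∀ t, {i // p i = t} ≃ {j // q j = t}) (hA : ∀ i j, q j < p i → A i j = 0) :
    (A.submatrix id (Equiv.ofFiberEquiv e)).det =
      ∏ t, (A.submatrix (fun i : {i // p i = t} => i.1) (fun j => (e t j).1)).det := by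
  have hT : (A.submatrix id (Equiv.ofFiberEquiv e)).BlockTriangular p := fun i j hij =>
    hA _ _ (by rwa [Equiv.ofFiberEquiv_map e])
  rw [hT.det_fintype]
  refine prod_congr rfl fun t _ => congrArg det ?_
  ext i ⟨j, rfl⟩
  rfl

end Matrix

theorem subBlock_submatrix_eq {M N K : ℕ} (R : Matrix (Fin N) (Fin M) ℝ)
    (C : Matrix (Fin N) (Fin K) ℝ) (Pn : Fin N → Prop) (Pm : Fin M → Prop) (Pk : Fin K → Prop)
    (e : {n // Pn n} ≃ ({m // Pm m} ⊕ {α // Pk α})) :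
    (subBlock R C Pn Pm Pk).submatrix id e =
      (fromCols R C).submatrix Subtype.val (fun n => Sum.map Subtype.val Subtype.val (e n)) := by
  ext i j
  cases h : e j <;> simp [h, subBlock]

theorem statement10_general {M N K L : ℕ} (hK : M + K = N)
    (R : Matrix (Fin N) (Fin M) ℝ) (C : Matrix (Fin N) (Fin K) ℝ)
    (𝔪 : Fin (L + 1) → Finset (Fin M)) (𝔫 : Fin (L + 1) → Finset (Fin N))
    (I : Fin (L + 1) → Finset (Fin K))
    (hm0 : 𝔪 0 = ∅) (hn0 : 𝔫 0 = ∅) (hI0 : I 0 = ∅)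
    (hmL : 𝔪 (Fin.last L) = Finset.univ) (hnL : 𝔫 (Fin.last L) = Finset.univ)
    (hIL : I (Fin.last L) = Finset.univ)
    (hmmono : Monotone 𝔪) (hnmono : Monotone 𝔫) (hImono : Monotone I)
    (h1 : ∀ s, ∀ m ∈ 𝔪 s, ∀ n ∉ 𝔫 s, R n m = 0)
    (h2 : ∀ s, ∀ α ∈ I s, ∀ n ∉ 𝔫 s, C n α = 0)
    (e : ∀ s : Fin L, {n // n ∈ 𝔫 s.succ \ 𝔫 s.castSucc} ≃
        ({m // m ∈ 𝔪 s.succ \ 𝔪 s.castSucc} ⊕ {α // α ∈ I s.succ \ I s.castSucc})) :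
    |(catCols hK R C).det| =
      ∏ s : Fin L,
        |((subBlock R C (· ∈ 𝔫 s.succ \ 𝔫 s.castSucc) (· ∈ 𝔪 s.succ \ 𝔪 s.castSucc)
            (· ∈ I s.succ \ I s.castSucc)).submatrix id (e s)).det| := by
  set p := chainLayer hn0 hnL
  set q : Fin M ⊕ Fin K → Fin L := Sum.elim (chainLayer hm0 hmL) (chainLayer hI0 hIL)
  have hA : ∀ n c, q c < p n → fromCols R C n c = 0
    | n, .inl m, h => eq_zero_of_chainLayer_lt R hmmono hm0 hmL hnmono hn0 hnL h1 h
    | n, .inr α, h => eq_zero_of_chainLayer_lt C hImono hI0 hIL hnmono hn0 hnL h2 h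
  -- `E t` is `e t` read on the fibres of `p` and `q`; `Equiv.ofFiberEquiv E` glues them together.
  let φ t : {n // p n = t} ≃ {n // n ∈ 𝔫 t.succ \ 𝔫 t.castSucc} :=
    Equiv.subtypeEquivRight fun _ => chainLayer_eq_iff hnmono hn0 hnL
  let ψ t : ({m // m ∈ 𝔪 t.succ \ 𝔪 t.castSucc} ⊕ {α // α ∈ I t.succ \ I t.castSucc}) ≃
      {c // q c = t} :=
    (Equiv.sumCongr (Equiv.subtypeEquivRight fun _ => chainLayer_eq_iff hmmono hm0 hmL).symm
      (Equiv.subtypeEquivRight fun _ => chainLayer_eq_iff hImono hI0 hIL).symm).trans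
      (Equiv.subtypeSum (p := fun c => q c = t)).symm
  have hψ : ∀ t x, ((ψ t x) : Fin M ⊕ Fin K) = Sum.map Subtype.val Subtype.val x := by
    rintro t (_ | _) <;> rfl
  let E t := (φ t).trans ((e t).trans (ψ t))
  calc |(catCols hK R C).det|
      = |((fromCols R C).submatrix id (Equiv.ofFiberEquiv E)).det| :=
        abs_det_submatrix_id_equiv _ ((finCongr hK.symm).trans finSumFinEquiv.symm) _
    _ = ∏ t, |((fromCols R C).submatrix (fun n : {n // p n = t} => n.1)
          (fun n => (E t n).1)).det| := by
        rw [det_submatrix_ofFiberEquiv _ _ hA, abs_prod]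
    _ = _ := by
        refine prod_congr rfl fun t _ => ?_
        rw [subBlock_submatrix_eq, ← det_submatrix_equiv_self (φ t)]
        congr 2
        ext i j
        simp only [submatrix_apply, E, Equiv.trans_apply, hψ]
        rfl

/-- factorization of `|det A|` along a nested sequence of buffering structures
`Γ₁ ⊆ … ⊆ Γ_L = Γ` (encoded with the convention `Γ₀ = ∅`, so that the `s = 0` factor is
`|det A_{Γ₁}|`):
`|det A| = |det A_{Γ₁}| * ∏_{s=1}^{L-1} |det A_{Γ_{s+1} ∖ Γ_s}|`. -/
theorem statement10 {M N K L : ℕ} (hK : M + K = N)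
    (ν : Matrix (Fin M) (Fin N) ℝ) (hrank : ν.rank = M)
    (R : Matrix (Fin N) (Fin M) ℝ) (C : Matrix (Fin N) (Fin K) ℝ)
    (hC : ∃ b : Module.Basis (Fin K) ℝ (LinearMap.ker ν.mulVecLin),
        ∀ k n, (b k).1 n = C n k)
    (𝔪 : Fin (L + 1) → Finset (Fin M)) (𝔫 : Fin (L + 1) → Finset (Fin N))
    (I : Fin (L + 1) → Finset (Fin K))
    (hm0 : 𝔪 0 = ∅) (hn0 : 𝔫 0 = ∅) (hI0 : I 0 = ∅)
    (hmL : 𝔪 (Fin.last L) = Finset.univ) (hnL : 𝔫 (Fin.last L) = Finset.univ)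
    (hIL : I (Fin.last L) = Finset.univ)
    (hmmono : Monotone 𝔪) (hnmono : Monotone 𝔫) (hImono : Monotone I)
    (h1 : ∀ s, ∀ m ∈ 𝔪 s, ∀ n ∉ 𝔫 s, R n m = 0)
    (h2 : ∀ s, ∀ α ∈ I s, ∀ n ∉ 𝔫 s, C n α = 0)
    (h3 : ∀ s, (𝔪 s).card + (I s).card = (𝔫 s).card)
    (e : ∀ s : Fin L, {n // n ∈ 𝔫 s.succ \ 𝔫 s.castSucc} ≃
        ({m // m ∈ 𝔪 s.succ \ 𝔪 s.castSucc} ⊕ {α // α ∈ I s.succ \ I s.castSucc})) :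
    |(catCols hK R C).det| =
      ∏ s : Fin L,
        |((subBlock R C (· ∈ 𝔫 s.succ \ 𝔫 s.castSucc) (· ∈ 𝔪 s.succ \ 𝔪 s.castSucc)
            (· ∈ I s.succ \ I s.castSucc)).submatrix id (e s)).det| :=
  statement10_general hK R C 𝔪 𝔫 I hm0 hn0 hI0 hmL hnL hIL hmmono hnmono hImono h1 h2 e
end

section
/- Let M, N, K, K_c be positive integers with M + K = N + K_c. Let R be an N×M real matrix, C an N×K real matrix, and D a K_c×M real matrix, and let A be the (N+K_c)×(M+K) square block matrix whose first N rows are [R | C] and whose last K_c rows are [D | 0_{K_c×K}]. Suppose there are subsets 𝔪 of the chemical (column) indices {1,…,M}, 𝔫 of the reaction (row) indices {1,…,N}, I_s of the kernel-column indices {1,…,K}, and B_s of the cokernel-row indices {1,…,K_c} such that: (i) R(n,m) = 0 for every m ∈ 𝔪 and n ∉ 𝔫; (ii) C(n,α) = 0 for every α ∈ I_s and n ∉ 𝔫; (iii) D(β,m) = 0 for every β ∉ B_s and m ∈ 𝔪; and (iv) |𝔪| + |I_s| = |𝔫| + |B_s|. Let A_{Γs} be the square submatrix of A with rows indexed by 𝔫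 ∪ B_s and columns indexed by 𝔪 ∪ I_s, and A_{Γ̄s} the complementary square submatrix. Then |det(A)| = |det(A_{Γs})| · |det(A_{Γ̄s})|. -/
open Matrix

/-- The `(N + Kc) × (N + Kc)` augmented matrix of the conserved-quantity case: its first `N`
rows are `[R | C]` and its last `Kc` rows are `[D | 0]`, given `M + K = N + Kc`. -/
noncomputable def augFull {M N K Kc : ℕ} (h : M + K = N + Kc)
    (R : Matrix (Fin N) (Fin M) ℝ) (C : Matrix (Fin N) (Fin K) ℝ)
    (D : Matrix (Fin Kc) (Fin M) ℝ) :
    Matrix (Fin (N + Kc)) (Fin (N + Kc)) ℝ :=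
  (Matrix.fromBlocks R C D 0).submatrix
    finSumFinEquiv.symm
    (fun j => finSumFinEquiv.symm (Fin.cast h.symm j))

/-- The square submatrix of the augmented block matrix (first rows `[R | C]`, last rows
`[D | 0]`) with reaction rows satisfying `Pn`, cokernel rows satisfying `Pb`, chemical
columns satisfying `Pm` and kernel columns satisfying `Pk`. -/
def subBlockFull {M N K Kc : ℕ}
    (R : Matrix (Fin N) (Fin M) ℝ) (C : Matrix (Fin N) (Fin K) ℝ)
    (D : Matrix (Fin Kc) (Fin M) ℝ)
    (Pn : Fin N → Prop) (Pb : Fin Kc → Prop) (Pm : Fin M → Prop) (Pk : Fin K → Prop) :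
    Matrix ({n // Pn n} ⊕ {β // Pb β}) ({m // Pm m} ⊕ {α // Pk α}) ℝ :=
  Matrix.fromBlocks (R.submatrix (fun i => i.1) (fun j => j.1))
    (C.submatrix (fun i => i.1) (fun j => j.1))
    (D.submatrix (fun i => i.1) (fun j => j.1)) 0

/-- factorization of `|det A|` along a buffering structure in the case of a
nontrivial cokernel (`Kc > 0`): `|det A| = |det A_Γs| * |det A_Γ̄s|`. -/
theorem statement11 {M N K Kc : ℕ}
    (hM : 0 < M) (hN : 0 < N) (hK : 0 < K) (hKc : 0 < Kc)
    (hcard : M + K = N + Kc)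
    (R : Matrix (Fin N) (Fin M) ℝ) (C : Matrix (Fin N) (Fin K) ℝ)
    (D : Matrix (Fin Kc) (Fin M) ℝ)
    (𝔪 : Finset (Fin M)) (𝔫 : Finset (Fin N)) (Is : Finset (Fin K)) (Bs : Finset (Fin Kc))
    (h1 : ∀ m ∈ 𝔪, ∀ n ∉ 𝔫, R n m = 0)
    (h2 : ∀ α ∈ Is, ∀ n ∉ 𝔫, C n α = 0)
    (h3 : ∀ β ∉ Bs, ∀ m ∈ 𝔪, D β m = 0)
    (h4 : 𝔪.card + Is.card = 𝔫.card + Bs.card)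
    (e : ({n // n ∈ 𝔫} ⊕ {β // β ∈ Bs}) ≃ ({m // m ∈ 𝔪} ⊕ {α // α ∈ Is}))
    (e' : ({n // n ∉ 𝔫} ⊕ {β // β ∉ Bs}) ≃ ({m // m ∉ 𝔪} ⊕ {α // α ∉ Is})) :
    |(augFull hcard R C D).det| =
      |((subBlockFull R C D (· ∈ 𝔫) (· ∈ Bs) (· ∈ 𝔪) (· ∈ Is)).submatrix id e).det| *
      |((subBlockFull R C D (· ∉ 𝔫) (· ∉ Bs) (· ∉ 𝔪) (· ∉ Is)).submatrix id e').det| := by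
  classical
  -- row equivalence
  let ρ : (({n // n ∈ 𝔫} ⊕ {β // β ∈ Bs}) ⊕ ({n // n ∉ 𝔫} ⊕ {β // β ∉ Bs})) ≃ Fin (N + Kc) :=
    (Equiv.sumSumSumComm _ _ _ _).trans
      ((Equiv.sumCongr (Equiv.sumCompl (· ∈ 𝔫)) (Equiv.sumCompl (· ∈ Bs))).trans finSumFinEquiv)
  -- column equivalence
  let σ : (({n // n ∈ 𝔫} ⊕ {β // β ∈ Bs}) ⊕ ({n // n ∉ 𝔫} ⊕ {β // β ∉ Bs})) ≃ Fin (N + Kc) :=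
    (Equiv.sumCongr e e').trans
      ((Equiv.sumSumSumComm _ _ _ _).trans
        ((Equiv.sumCongr (Equiv.sumCompl (· ∈ 𝔪)) (Equiv.sumCompl (· ∈ Is))).trans
          (finSumFinEquiv.trans (finCongr hcard))))
  have key : (augFull hcard R C D).submatrix ρ σ =
      Matrix.fromBlocks
        ((subBlockFull R C D (· ∈ 𝔫) (· ∈ Bs) (· ∈ 𝔪) (· ∈ Is)).submatrix id e)
        (((augFull hcard R C D).submatrix ρ σ).toBlocks₁₂)
        0
        ((subBlockFull R C D (· ∉ 𝔫) (· ∉ Bs) (· ∉ 𝔪) (· ∉ Is)).submatrix id e') := by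
    ext i j
    rcases i with i | i <;> rcases j with j | j
    · -- top-left block
      rcases i with n | β <;> rcases hj : e j with m | α <;>
        simp [augFull, subBlockFull, ρ, σ, hj]
    · -- top-right block
      simp [Matrix.toBlocks₁₂]
    · -- bottom-left zero block
      rcases i with n | β <;> rcases hj : e j with m | α
      · simp [augFull, ρ, σ, hj, h1 m.1 m.2 n.1 n.2]
      · simp [augFull, ρ, σ, hj, h2 α.1 α.2 n.1 n.2]
      · simp [augFull, ρ, σ, hj, h3 β.1 β.2 m.1 m.2]
      · simp [augFull, ρ, σ, hj]
    · -- bottom-right block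
      rcases i with n | β <;> rcases hj : e' j with m | α <;>
        simp [augFull, subBlockFull, ρ, σ, hj]
  calc |(augFull hcard R C D).det|
      = |((augFull hcard R C D).submatrix ρ σ).det| :=
        (Matrix.abs_det_submatrix_equiv_equiv ρ σ _).symm
    _ = _ := by
        rw [key, Matrix.det_fromBlocks_zero₂₁, abs_mul]
end

section
/- Let ν be an M×N real matrix, R an N×M real matrix, 𝔪 ⊆ {1,…,M} a set of chemicals and 𝔫 ⊆ {1,…,N} a set of reactions such that R(n,m) = 0 for every m ∈ 𝔪 and n ∉ 𝔫 (output-completeness). Let c¹,…,c^{K_s} ∈ ℝ^N be kernel vectors of ν (ν c^α = 0) with c^α(n) = 0 for every n ∉ 𝔫. Suppose η ∈ ℝ^M satisfies η_m = 0 for all m ∉ 𝔪, and there exist ζ₁,…,ζ_{K_s} ∈ ℝ such that for every n ∈ 𝔫: ∑_{m∈𝔪} R(n,m) η_m = ∑_{α=1}^{K_s} ζ_α c^α(n). Then η is a null vector of the Jacobian J = ν ⬝ R, i.e. (ν ⬝ R) η = 0. In particular, if η ≠ 0 then J has a nonzero null vector whose support is contained in the chemical set 𝔪 of the buffering structure.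 -/
/-!
Since `η` is supported in `𝔪`, output-completeness makes `R η` vanish off `𝔫`, while on `𝔫` the
null-vector equation identifies it with `∑ α, ζ α • c α`. Hence `R η` is a linear combination of
kernel vectors of `ν`, and `(ν * R) η = ν (R η) = 0`.
-/

open Matrix

namespace Matrix

variable {ι κ S : Type*} [Fintype κ] [CommSemiring S]

theorem mulVec_apply_eq_sum_of_support_subset (A : Matrix ι κ S) {v : κ → S} {s : Finset κ}
    (hv : ∀ j ∉ s, v j = 0) (i : ι) : (A *ᵥ v) i = ∑ j ∈ s, A i j * v j :=
  (Finset.sum_subset (Finset.subset_univ s) fun j _ hj => by rw [hv j hj, mul_zero]).symm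

theorem mulVec_sum_smul_eq_zero {α : Type*} [Fintype α] (A : Matrix ι κ S) {c : α → κ → S}
    (hker : ∀ a, A *ᵥ c a = 0) (ζ : α → S) : A *ᵥ ∑ a, ζ a • c a = 0 := by
  simp only [mulVec_sum, mulVec_smul, hker, smul_zero, Finset.sum_const_zero]

theorem mulVec_eq_sum_smul_of_outputComplete {α : Type*} [Fintype α] (R : Matrix ι κ S)
    {𝔪 : Finset κ} {𝔫 : Finset ι} (hoc : ∀ m ∈ 𝔪, ∀ n ∉ 𝔫, R n m = 0)
    {c : α → ι → S} (hsupp : ∀ a, ∀ n ∉ 𝔫, c a n = 0)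
    {η : κ → S} (hη : ∀ m ∉ 𝔪, η m = 0) {ζ : α → S}
    (hnull : ∀ n ∈ 𝔫, ∑ m ∈ 𝔪, R n m * η m = ∑ a, ζ a * c a n) :
    R *ᵥ η = ∑ a, ζ a • c a := by
  funext n
  rw [mulVec_apply_eq_sum_of_support_subset R hη, Finset.sum_apply]
  simp only [Pi.smul_apply, smul_eq_mul]
  by_cases hn : n ∈ 𝔫
  · exact hnull n hn
  · rw [Finset.sum_eq_zero fun m hm => by rw [hoc m hm n hn, zero_mul],
      Finset.sum_eq_zero fun a _ => by rw [hsupp a n hn, mul_zero]]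

end Matrix

/-- if `(𝔪, 𝔫)` is output-complete, the `c^α` are kernel vectors of `ν`
supported in `𝔫`, and `η` is supported in `𝔪` and satisfies, together with coefficients
`ζ`, the null-vector equation of the submatrix `A_Γs` on 𝔫, then `η` is a null vector of
the Jacobian `J = ν * R`. -/
theorem statement12 {M N Ks : ℕ}
    (ν : Matrix (Fin M) (Fin N) ℝ) (R : Matrix (Fin N) (Fin M) ℝ)
    (𝔪 : Finset (Fin M)) (𝔫 : Finset (Fin N))
    (hoc : ∀ m ∈ 𝔪, ∀ n ∉ 𝔫, R n m = 0)
    (c : Fin Ks → Fin N → ℝ)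
    (hker : ∀ α, ν.mulVec (c α) = 0)
    (hsupp : ∀ α, ∀ n ∉ 𝔫, c α n = 0)
    (η : Fin M → ℝ) (hη : ∀ m ∉ 𝔪, η m = 0)
    (ζ : Fin Ks → ℝ)
    (hnull : ∀ n ∈ 𝔫, ∑ m ∈ 𝔪, R n m * η m = ∑ α, ζ α * c α n) :
    (ν * R).mulVec η = 0 := by
  rw [← mulVec_mulVec, mulVec_eq_sum_smul_of_outputComplete R hoc hsupp hη hnull]
  exact mulVec_sum_smul_eq_zero ν hker ζ
end

section
/- Let ν̃ be an M̃×N real matrix, L a K_c×M̃ real matrix, R_ind an N×M̃ real matrix, and R_dep an N×K_c real matrix, and define the reduced Jacobian J̃ = ν̃ ⬝ (R_ind + R_dep ⬝ L). Let 𝔪_ind ⊆ {1,…,M̃} (independent chemicals in the buffering structure), 𝔪_dep ⊆ {1,…,K_c} (dependent chemicals in the buffering structure), and 𝔫 ⊆ {1,…,N} (reactions in the buffering structure) satisfy: (i) R_ind(n,m) = 0 for every m ∈ 𝔪_ind and n ∉ 𝔫; (ii) R_dep(n,m') = 0 for every m' ∈ 𝔪_dep and n ∉ 𝔫; (iii)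 L(m',m) = 0 for every m' ∉ 𝔪_dep and m ∈ 𝔪_ind. Let c¹,…,c^{K_s} ∈ ℝ^N be kernel vectors of ν̃ (ν̃ c^α = 0) with c^α(n) = 0 for every n ∉ 𝔫. Suppose η ∈ ℝ^{M̃} satisfies η_m = 0 for all m ∉ 𝔪_ind, and there exist ζ₁,…,ζ_{K_s} ∈ ℝ such that for every n ∈ 𝔫: ∑_{m} R_ind(n,m) η_m + ∑_{m'} R_dep(n,m') (L η)_{m'} = ∑_{α=1}^{K_s} ζ_α c^α(n). Then J̃ η = 0; i.e. the reduced Jacobian has a null vector supported on the independent chemicals of the buffering structure. -/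
open Matrix

/-- null vector of the reduced Jacobian supported on the independent chemicals
of a buffering structure, in the case of a nontrivial cokernel. -/
theorem statement13 {Mt N Kc Ks : ℕ}
    (νt : Matrix (Fin Mt) (Fin N) ℝ) (L : Matrix (Fin Kc) (Fin Mt) ℝ)
    (Rind : Matrix (Fin N) (Fin Mt) ℝ) (Rdep : Matrix (Fin N) (Fin Kc) ℝ)
    (mind : Finset (Fin Mt)) (mdep : Finset (Fin Kc)) (𝔫 : Finset (Fin N))
    (h1 : ∀ m ∈ mind, ∀ n ∉ 𝔫, Rind n m = 0)
    (h2 : ∀ m' ∈ mdep, ∀ n ∉ 𝔫, Rdep n m' = 0)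
    (h3 : ∀ m' ∉ mdep, ∀ m ∈ mind, L m' m = 0)
    (c : Fin Ks → Fin N → ℝ)
    (hker : ∀ α, νt.mulVec (c α) = 0)
    (hsupp : ∀ α, ∀ n ∉ 𝔫, c α n = 0)
    (η : Fin Mt → ℝ) (hη : ∀ m ∉ mind, η m = 0)
    (ζ : Fin Ks → ℝ)
    (hnull : ∀ n ∈ 𝔫,
        (∑ m, Rind n m * η m) + (∑ m', Rdep n m' * L.mulVec η m') = ∑ α, ζ α * c α n) :
    (νt * (Rind + Rdep * L)).mulVec η = 0 := by
  have expand : ∀ n, (Rind + Rdep * L).mulVec η n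
      = (∑ m, Rind n m * η m) + ∑ m', Rdep n m' * L.mulVec η m' := by
    intro n
    simp only [mulVec, dotProduct, Matrix.add_apply, Matrix.mul_apply, add_mul,
      Finset.sum_add_distrib, Finset.sum_mul, Finset.mul_sum]
    congr 1
    rw [Finset.sum_comm]
    congr 1; funext j; congr 1; funext x; ring
  have key : (Rind + Rdep * L).mulVec η = fun n => ∑ α, ζ α * c α n := by
    funext n
    rw [expand]
    by_cases hn : n ∈ 𝔫
    · exact hnull n hn
    · have hRind : ∀ m, Rind n m * η m = 0 := by
        intro m
        by_cases hm : m ∈ mind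
        · rw [h1 m hm n hn, zero_mul]
        · rw [hη m hm, mul_zero]
      have hLη : ∀ m', m' ∉ mdep → L.mulVec η m' = 0 := by
        intro m' hm'
        simp only [mulVec, dotProduct]
        apply Finset.sum_eq_zero
        intro m _
        by_cases hm : m ∈ mind
        · simp [h3 m' hm' m hm]
        · simp [hη m hm]
      have hRdep : ∀ m', Rdep n m' * L.mulVec η m' = 0 := by
        intro m'
        by_cases hm' : m' ∈ mdep
        · rw [h2 m' hm' n hn, zero_mul]
        · rw [hLη m' hm', mul_zero]
      rw [Finset.sum_eq_zero fun m _ => hRind m,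
        Finset.sum_eq_zero fun m' _ => hRdep m',
        Finset.sum_eq_zero fun α _ => by rw [hsupp α n hn, mul_zero]]
      ring
  rw [← mulVec_mulVec, key]
  funext i
  have : νt.mulVec (fun n => ∑ α, ζ α * c α n) i
      = ∑ α, ζ α * νt.mulVec (c α) i := by
    simp [mulVec, dotProduct, Finset.mul_sum]
    rw [Finset.sum_comm]
    congr 1; funext α; congr 1; funext n; ring
  rw [this]
  simp [hker]
end
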